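/- Let Γ be a finite collection of finite sets such that Γ−{S} is an hke collection for each S ∈ Γ (all with the same α). Then there exists an integer m such that for every partition {Γ₁, Γ₂} of Γ into two non-empty subcollections, |⋂Γ₁ − ⋃Γ₂| − |⋂Γ₂ − ⋃Γ₁| = (−1)^{|Γ₁|+1} · m. -/

import Mathlib

open Finset

/-- Union of a finite collection of finite sets. -/
def collU {α : Type*} [DecidableEq α] (Γ : Finset (Finset α)) : Finset α :=
  Γ.sup id

/-- Intersection of a finite collection of finite sets
(equals the usual intersection when the collection is non-empty). -/
def collI {α : Type*} [DecidableEq α] (Γ : Finset (Finset α)) : Finset α :=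
  (Γ.sup id).filter (fun x => ∀ S ∈ Γ, x ∈ S)

/-- `e Γ = |⋃Γ| + |⋂Γ|` as an integer. -/
def collE {α : Type*} [DecidableEq α] (Γ : Finset (Finset α)) : ℤ :=
  (collU Γ).card + (collI Γ).card

/-- `F` is a hereditary König–Egerváry collection with common cardinality `a`. -/
def IsHKE {α : Type*} [DecidableEq α] (F : Finset (Finset α)) (a : ℕ) : Prop :=
  (∀ S ∈ F, S.card = a) ∧
  ∀ Γ ⊆ F, Γ.Nonempty → collE Γ = 2 * (a : ℤ)

/-!
Write `d(Γ₁, Γ₂) = |⋂Γ₁ − ⋃Γ₂| − |⋂Γ₂ − ⋃Γ₁|` (`collImbalance`). Splitting both sets along a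
further set `S` gives `d(Γ₁ + S, Γ₂) + d(Γ₁, Γ₂ + S) = d(Γ₁, Γ₂)`. Inside an hke collection `d`
vanishes on non-empty subcollections (one direction of Theorem 2.13), so when `Γ₁ ∪ Γ₂ = Γ − S`
the identity says that moving `S` from one side to the other flips the sign of `d`. Hence
`(-1)^(|Γ₁|+1) d(Γ₁, Γ − Γ₁)` does not change when an element is added to `Γ₁`, and it takes the
same value on all singletons: for `|Γ| ≥ 3` both `{T}` and `{T'}` are linked to `{T, T'}`, and for
`Γ = {T, T'}` both values are `|T| − |T'| = 0`.
-/

section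
variable {α : Type*} [DecidableEq α]

lemma mem_collI {Γ : Finset (Finset α)} (hΓ : Γ.Nonempty) {x : α} :
    x ∈ collI Γ ↔ ∀ S ∈ Γ, x ∈ S := by
  obtain ⟨T, hT⟩ := hΓ
  simp only [collI, mem_filter, mem_sup, id]
  exact ⟨And.right, fun hx => ⟨⟨T, hT, hx T hT⟩, hx⟩⟩

lemma collU_insert (S : Finset α) (Γ : Finset (Finset α)) :
    collU (insert S Γ) = S ∪ collU Γ := by
  simp [collU]

lemma collI_insert (S : Finset α) {Γ : Finset (Finset α)} (hΓ : Γ.Nonempty) :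
    collI (insert S Γ) = S ∩ collI Γ := by
  ext x
  simp [mem_collI (insert_nonempty S Γ), mem_collI hΓ]

lemma collU_singleton (S : Finset α) : collU {S} = S := by
  simp [collU]

lemma collI_singleton (S : Finset α) : collI {S} = S := by
  ext x
  simp [mem_collI (singleton_nonempty S)]

def collImbalance (Γ₁ Γ₂ : Finset (Finset α)) : ℤ :=
  ((collI Γ₁ \ collU Γ₂).card : ℤ) - ((collI Γ₂ \ collU Γ₁).card : ℤ)

lemma collImbalance_singleton_singleton (A B : Finset α) :
    collImbalance {A} {B} = (A.card : ℤ) - B.card := by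
  have hA := card_sdiff_add_card_inter A B
  have hB := card_sdiff_add_card_inter B A
  rw [inter_comm] at hB
  simp only [collImbalance, collI_singleton, collU_singleton]
  omega

lemma card_inter_sdiff_add_card_sdiff_union (S I U : Finset α) :
    ((S ∩ I) \ U).card + (I \ (S ∪ U)).card = (I \ U).card := by
  rw [← card_inter_add_card_sdiff (I \ U) S]
  congr 2 <;> ext x <;> simp only [mem_inter, mem_sdiff, mem_union] <;> tauto

lemma collImbalance_insert_left_add_insert_right (S : Finset α)
    {Γ₁ Γ₂ : Finset (Finset α)} (h₁ : Γ₁.Nonempty) (h₂ : Γ₂.Nonempty) :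
    collImbalance (insert S Γ₁) Γ₂ + collImbalance Γ₁ (insert S Γ₂) = collImbalance Γ₁ Γ₂ := by
  have h₁₂ := card_inter_sdiff_add_card_sdiff_union S (collI Γ₁) (collU Γ₂)
  have h₂₁ := card_inter_sdiff_add_card_sdiff_union S (collI Γ₂) (collU Γ₁)
  simp only [collImbalance, collI_insert S h₁, collI_insert S h₂, collU_insert]
  omega

lemma IsHKE.collImbalance_singleton_right_eq_zero {F Γ₁ : Finset (Finset α)} {a : ℕ}
    (hF : IsHKE F a) (hΓ₁ : Γ₁ ⊆ F) (h₁ : Γ₁.Nonempty) {T : Finset α} (hT : T ∈ F) :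
    collImbalance Γ₁ {T} = 0 := by
  have hΓ₁e := hF.2 Γ₁ hΓ₁ h₁
  have hTe := hF.2 (insert T Γ₁) (insert_subset hT hΓ₁) (insert_nonempty T Γ₁)
  simp only [collE, collU_insert, collI_insert T h₁] at hΓ₁e hTe
  have hTa := hF.1 T hT
  have hU := card_union_add_card_inter T (collU Γ₁)
  have hI := card_sdiff_add_card_inter (collI Γ₁) T
  have hTU := card_sdiff_add_card_inter T (collU Γ₁)
  rw [inter_comm T (collI Γ₁)] at hTe
  simp only [collImbalance, collI_singleton, collU_singleton]
  omega

theorem IsHKE.collImbalance_eq_zero {F : Finset (Finset α)} {a : ℕ} (hF : IsHKE F a)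
    {Γ₁ Γ₂ : Finset (Finset α)} (hsub : Γ₁ ∪ Γ₂ ⊆ F) (h₁ : Γ₁.Nonempty) (h₂ : Γ₂.Nonempty) :
    collImbalance Γ₁ Γ₂ = 0 := by
  induction h₂ using Nonempty.cons_induction generalizing Γ₁ with
  | singleton T =>
    exact hF.collImbalance_singleton_right_eq_zero (union_subset_left hsub) h₁
      (hsub (mem_union_right _ (mem_singleton_self T)))
  | cons T Γ₂ _ h₂ ih =>
    rw [cons_eq_insert, union_insert, insert_subset_iff] at hsub
    rw [cons_eq_insert]
    have h₀ := ih hsub.2 h₁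
    have hT₀ := ih (by rw [insert_union]; exact insert_subset hsub.1 hsub.2) (insert_nonempty T Γ₁)
    linarith [collImbalance_insert_left_add_insert_right T h₁ h₂]

lemma IsHKE.collImbalance_insert_left {F Γ₁ Γ₂ : Finset (Finset α)} {a : ℕ} (hF : IsHKE F a)
    (hsub : Γ₁ ∪ Γ₂ ⊆ F) (h₁ : Γ₁.Nonempty) (h₂ : Γ₂.Nonempty) (S : Finset α) :
    collImbalance (insert S Γ₁) Γ₂ = -collImbalance Γ₁ (insert S Γ₂) := by
  linarith [collImbalance_insert_left_add_insert_right S h₁ h₂, hF.collImbalance_eq_zero hsub h₁ h₂]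

lemma collImbalance_singleton_sdiff_eq {Γ : Finset (Finset α)} {a : ℕ}
    (hΓ : ∀ S ∈ Γ, IsHKE (Γ.erase S) a) {T T' : Finset α} (hT : T ∈ Γ) (hT' : T' ∈ Γ) :
    collImbalance {T} (Γ \ {T}) = collImbalance {T'} (Γ \ {T'}) := by
  rcases eq_or_ne T T' with rfl | hne
  · rfl
  set Δ := Γ \ {T, T'}
  have hΓT : Γ \ {T} = insert T' Δ := by ext X; simp only [Δ, mem_sdiff, mem_insert, mem_singleton]; grind
  have hΓT' : Γ \ {T'} = insert T Δ := by ext X; simp only [Δ, mem_sdiff, mem_insert, mem_singleton]; grind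
  rcases Δ.eq_empty_or_nonempty with hΔ | hΔ
  · have hTa := (hΓ T' hT').1 T (mem_erase.2 ⟨hne, hT⟩)
    have hT'a := (hΓ T hT).1 T' (mem_erase.2 ⟨hne.symm, hT'⟩)
    rw [hΓT, hΓT', hΔ, insert_empty, insert_empty, collImbalance_singleton_singleton,
      collImbalance_singleton_singleton, hTa, hT'a]
  · have hsub : {T} ∪ Δ ⊆ Γ.erase T' := by intro X; simp only [Δ, mem_union, mem_singleton, mem_sdiff, mem_insert, mem_erase]; grind
    have hsub' : {T'} ∪ Δ ⊆ Γ.erase T := by intro X; simp only [Δ, mem_union, mem_singleton, mem_sdiff, mem_insert, mem_erase]; grind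
    have h₁ := (hΓ T' hT').collImbalance_insert_left hsub (singleton_nonempty T) hΔ T'
    have h₂ := (hΓ T hT).collImbalance_insert_left hsub' (singleton_nonempty T') hΔ T
    rw [pair_comm T' T] at h₁
    rw [hΓT, hΓT']
    linarith

lemma collImbalance_sdiff_eq_neg_one_pow_mul {Γ : Finset (Finset α)} {a : ℕ}
    (hΓ : ∀ S ∈ Γ, IsHKE (Γ.erase S) a) {T₀ : Finset α} (hT₀ : T₀ ∈ Γ)
    {Γ₁ : Finset (Finset α)} (h₁ : Γ₁.Nonempty) (hsub : Γ₁ ⊆ Γ) (h₂ : (Γ \ Γ₁).Nonempty) :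
    collImbalance Γ₁ (Γ \ Γ₁) = (-1) ^ (Γ₁.card + 1) * collImbalance {T₀} (Γ \ {T₀}) := by
  induction h₁ using Nonempty.cons_induction with
  | singleton T =>
    rw [collImbalance_singleton_sdiff_eq hΓ (singleton_subset_iff.1 hsub) hT₀]
    simp
  | cons S Γ₁ hS h₁ ih =>
    rw [cons_eq_insert, insert_subset_iff] at hsub
    rw [cons_eq_insert] at h₂ ⊢
    have hmove : insert S (Γ \ insert S Γ₁) = Γ \ Γ₁ := by
      ext X; simp only [mem_insert, mem_sdiff]; grind
    have hsub' : Γ₁ ∪ Γ \ insert S Γ₁ ⊆ Γ.erase S := by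
      intro X; simp only [mem_union, mem_sdiff, mem_insert, mem_erase]; grind
    rw [(hΓ S hsub.1).collImbalance_insert_left hsub' h₁ h₂ S, hmove,
      ih hsub.2 (h₂.mono (sdiff_subset_sdiff subset_rfl (subset_insert S Γ₁))),
      card_insert_of_notMem hS]
    ring

end

theorem stmt_6_general {α : Type*} [DecidableEq α] (Γ : Finset (Finset α))
    (hcard : 2 ≤ Γ.card) (a : ℕ)
    (hhke : ∀ S ∈ Γ, IsHKE (Γ.erase S) a) :
    ∃ m : ℤ, ∀ Γ₁ Γ₂ : Finset (Finset α),
      Γ₁ ∪ Γ₂ = Γ → Disjoint Γ₁ Γ₂ → Γ₁.Nonempty → Γ₂.Nonempty →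
      ((collI Γ₁ \ collU Γ₂).card : ℤ) - ((collI Γ₂ \ collU Γ₁).card : ℤ)
        = (-1) ^ (Γ₁.card + 1) * m := by
  obtain ⟨T₀, hT₀⟩ : Γ.Nonempty := card_pos.1 (by omega)
  refine ⟨collImbalance {T₀} (Γ \ {T₀}), fun Γ₁ Γ₂ hU hd h₁ h₂ => ?_⟩
  obtain rfl : Γ₂ = Γ \ Γ₁ := by rw [← hU, union_sdiff_cancel_left hd]
  exact collImbalance_sdiff_eq_neg_one_pow_mul hhke hT₀ h₁ (hU ▸ subset_union_left) h₂

theorem stmt_6 {α : Type*} [DecidableEq α] (Γ : Finset (Finset α))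
    (hcard : 2 ≤ Γ.card) (a : ℕ) (ha : 0 < a)
    (hhke : ∀ S ∈ Γ, IsHKE (Γ.erase S) a) :
    ∃ m : ℤ, ∀ Γ₁ Γ₂ : Finset (Finset α),
      Γ₁ ∪ Γ₂ = Γ → Disjoint Γ₁ Γ₂ → Γ₁.Nonempty → Γ₂.Nonempty →
      ((collI Γ₁ \ collU Γ₂).card : ℤ) - ((collI Γ₂ \ collU Γ₁).card : ℤ)
        = (-1) ^ (Γ₁.card + 1) * m :=
  stmt_6_general Γ hcard a hhke
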